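/- For every integer n ≥ 3, the number of cyclic permutations of length n avoiding both cyclic patterns [1324] and [1423] equals 2^{n−2}; that is, #Av_n([1324],[1423]) = 2^{n−2}. -/

import Mathlib

/-- A sequence `σ` of length `n` (with distinct values) contains the pattern `π`
of length `k` if some subsequence of `σ` is order isomorphic to `π`. -/
def ContainsPat {n k : ℕ} (σ : Fin n → Fin n) (π : Fin k → ℕ) : Prop :=
  ∃ f : Fin k → Fin n, StrictMono f ∧ ∀ i j : Fin k, π i < π j ↔ σ (f i) < σ (f j)

/-- The rotation of the sequence `σ` starting at position `r`. -/
def rotSeq {n : ℕ} (σ : Fin n → Fin n) (r : Fin n) : Fin n → Fin n :=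
  fun i => σ (i + r)

/-- The cyclic permutation `[σ]` contains the cyclic pattern `[π]` if some
rotation of `σ` contains `π` linearly. -/
def CycContains {n k : ℕ} (σ : Fin n → Fin n) (π : Fin k → ℕ) : Prop :=
  ∃ r : Fin n, ContainsPat (rotSeq σ r) π

/-- The cyclic permutation `[σ]` avoids the cyclic pattern `[π]`. -/
def CycAvoids {n k : ℕ} (σ : Fin n → Fin n) (π : Fin k → ℕ) : Prop :=
  ¬ CycContains σ π

/-- The cyclic permutation `[σ]`, i.e. the set of all rotations of `σ`. -/
def CycClass {n : ℕ} (σ : Fin n → Fin n) : Set (Fin n → Fin n) :=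
  Set.range (rotSeq σ)

/-- The set of cyclic permutations (rotation classes) of length `n` all of whose
representatives are permutations and which satisfy the (rotation-invariant)
predicate `P`. -/
def AvClasses (n : ℕ) (P : (Fin n → Fin n) → Prop) : Set (Set (Fin n → Fin n)) :=
  { C | ∃ σ : Equiv.Perm (Fin n), C = CycClass ⇑σ ∧ P ⇑σ }

/-- The cyclic descent number: the number of indices `i` (mod `n`) with
`σ i > σ (i+1)`. -/
def cdes {n : ℕ} (σ : Fin n → Fin n) : ℕ :=
  (Finset.univ.filter fun i : Fin n =>
    σ ⟨(↑i + 1) % n, Nat.mod_lt _ i.pos⟩ < σ i).card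

/-- The cyclic peak number: the number of indices `i` (mod `n`) with
`σ (i-1) < σ i > σ (i+1)`. -/
def cpk {n : ℕ} (σ : Fin n → Fin n) : ℕ :=
  (Finset.univ.filter fun i : Fin n =>
    σ ⟨(↑i + (n - 1)) % n, Nat.mod_lt _ i.pos⟩ < σ i ∧
    σ ⟨(↑i + 1) % n, Nat.mod_lt _ i.pos⟩ < σ i).card

/-!
Rotate a cyclic permutation so that its maximum `n` comes last. Every cyclic occurrence of
`[1324]` or `[1423]` then forces a peak (a `132` or `231`) among the first `n - 1` entries, and
conversely every such peak, together with the final `n`, yields one of the two patterns. A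
sequence without peaks decreases down to its minimum and increases afterwards, so it is
determined by the set of values before the `1`, an arbitrary subset of `{2, …, n - 1}`.
-/

open Finset Function

variable {n : ℕ}

theorem rotSeq_rotSeq (σ : Fin n → Fin n) (r s : Fin n) :
    rotSeq (rotSeq σ r) s = rotSeq σ (s + r) := by
  funext i
  simp only [rotSeq, add_assoc]

section Rotation

variable [NeZero n]

@[simp]
theorem rotSeq_zero (σ : Fin n → Fin n) : rotSeq σ 0 = σ := by
  funext i
  simp [rotSeq]

theorem mem_cycClass_self (σ : Fin n → Fin n) : σ ∈ CycClass σ :=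
  ⟨0, rotSeq_zero σ⟩

theorem cycClass_rotSeq (σ : Fin n → Fin n) (r : Fin n) :
    CycClass (rotSeq σ r) = CycClass σ := by
  ext τ
  constructor
  · rintro ⟨s, rfl⟩
    exact ⟨s + r, (rotSeq_rotSeq σ r s).symm⟩
  · rintro ⟨s, rfl⟩
    exact ⟨s - r, by rw [rotSeq_rotSeq, sub_add_cancel]⟩

theorem cycContains_rotSeq_iff {k : ℕ} (σ : Fin n → Fin n) (r : Fin n) (π : Fin k → ℕ) :
    CycContains (rotSeq σ r) π ↔ CycContains σ π := by
  constructor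
  · rintro ⟨s, h⟩
    exact ⟨s + r, by rwa [rotSeq_rotSeq] at h⟩
  · rintro ⟨s, h⟩
    exact ⟨s - r, by rwa [rotSeq_rotSeq, sub_add_cancel]⟩

theorem cycAvoids_rotSeq_iff {k : ℕ} (σ : Fin n → Fin n) (r : Fin n) (π : Fin k → ℕ) :
    CycAvoids (rotSeq σ r) π ↔ CycAvoids σ π :=
  (cycContains_rotSeq_iff σ r π).not

theorem eq_of_mem_cycClass {σ τ : Fin n → Fin n} (hσ : Injective σ) (hτ : τ ∈ CycClass σ)
    {x : Fin n} (hx : τ x = σ x) : τ = σ := by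
  obtain ⟨r, rfl⟩ := hτ
  rw [add_eq_left.1 (hσ hx), rotSeq_zero]

end Rotation

theorem exists_rotSeq_apply_last {σ : Fin (n + 1) → Fin (n + 1)} (hσ : Surjective σ) :
    ∃ r, rotSeq σ r (Fin.last n) = Fin.last n := by
  obtain ⟨x, hx⟩ := hσ (Fin.last n)
  exact ⟨x - Fin.last n, by rw [rotSeq, add_sub_cancel, hx]⟩

theorem Fin.cyclic_add_right {i j k : Fin n} (hij : i < j) (hjk : j < k) (r : Fin n) :
    i + r < j + r ∧ j + r < k + r ∨ j + r < k + r ∧ k + r < i + r ∨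
      k + r < i + r ∧ i + r < j + r := by
  simp only [Fin.lt_def, Fin.val_add_eq_ite] at *
  split_ifs <;> omega

def HasPeak {k : ℕ} {α : Type*} [Preorder α] (f : Fin k → α) : Prop :=
  ∃ a b c, a < b ∧ b < c ∧ f a < f b ∧ f c < f b

theorem containsPat_1324 {τ : Fin n → Fin n} {a b c d : Fin n} (hab : a < b) (hbc : b < c)
    (hcd : c < d) (h₁ : τ a < τ c) (h₂ : τ c < τ b) (h₃ : τ b < τ d) :
    ContainsPat τ ![1, 3, 2, 4] := by
  refine ⟨![a, b, c, d], Fin.strictMono_iff_lt_succ.2 fun i => ?_, fun i j => ?_⟩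
  · fin_cases i <;> assumption
  · fin_cases i <;> fin_cases j <;> simp <;> order

theorem containsPat_1423 {τ : Fin n → Fin n} {a b c d : Fin n} (hab : a < b) (hbc : b < c)
    (hcd : c < d) (h₁ : τ a < τ c) (h₂ : τ c < τ d) (h₃ : τ d < τ b) :
    ContainsPat τ ![1, 4, 2, 3] := by
  refine ⟨![a, b, c, d], Fin.strictMono_iff_lt_succ.2 fun i => ?_, fun i j => ?_⟩
  · fin_cases i <;> assumption
  · fin_cases i <;> fin_cases j <;> simp <;> order

/-- Whichever way the rotation cuts the cyclic occurrence, one of the triples `(f 0, f 1, f 2)`,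
`(f 2, f 3, f 0)` stays in order and forms a peak. -/
theorem hasPeak_of_cycContains {σ : Fin n → Fin n} {π : Fin 4 → ℕ}
    (hπ₁ : π 0 < π 2) (hπ₂ : π 2 < π 1) (hπ₃ : π 2 < π 3) (h : CycContains σ π) :
    HasPeak σ := by
  obtain ⟨r, f, hf, hπ⟩ := h
  have h₀₂ : σ (f 0 + r) < σ (f 2 + r) := (hπ 0 2).1 hπ₁
  have h₂₁ : σ (f 2 + r) < σ (f 1 + r) := (hπ 2 1).1 hπ₂
  have h₂₃ : σ (f 2 + r) < σ (f 3 + r) := (hπ 2 3).1 hπ₃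
  rcases lt_or_gt_of_ne (h₀₂.ne ∘ congrArg σ) with hlt | hgt
  · obtain ⟨h₀₁, h₁₂⟩ | ⟨-, h₂₀⟩ | ⟨h₂₀, -⟩ := Fin.cyclic_add_right
      (hf (show (0 : Fin 4) < 1 by decide)) (hf (show (1 : Fin 4) < 2 by decide)) r
    · exact ⟨_, _, _, h₀₁, h₁₂, h₀₂.trans h₂₁, h₂₁⟩
    all_goals exact absurd hlt h₂₀.asymm
  · obtain ⟨h₀₂', -⟩ | ⟨h₂₃', h₃₀⟩ | ⟨-, h₀₂'⟩ := Fin.cyclic_add_right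
      (hf (show (0 : Fin 4) < 2 by decide)) (hf (show (2 : Fin 4) < 3 by decide)) r
    · exact absurd hgt h₀₂'.asymm
    · exact ⟨_, _, _, h₂₃', h₃₀, h₂₃, h₀₂.trans h₂₃⟩
    · exact absurd hgt h₀₂'.asymm

/-- With the maximum in last position, a peak `a < b < c` extends to `1324` at `(a, b, c, last)`
or, after rotating to start at `c`, to `1423` at `(c, last, a, b)`. -/
theorem cycContains_of_hasPeak {σ : Fin (n + 1) → Fin (n + 1)} (hσ : Injective σ)
    (hlast : σ (Fin.last n) = Fin.last n) (h : HasPeak σ) :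
    CycContains σ ![1, 3, 2, 4] ∨ CycContains σ ![1, 4, 2, 3] := by
  obtain ⟨a, b, c, hab, hbc, hba, hbc'⟩ := h
  have hc : c < Fin.last n := by
    refine Fin.lt_last_iff_ne_last.2 fun hc => ?_
    rw [hc, hlast] at hbc'
    exact (Fin.le_last _).not_gt hbc'
  have hb : σ b < σ (Fin.last n) := by
    rw [hlast, Fin.lt_last_iff_ne_last, ← hlast]
    exact hσ.ne (hbc.trans hc).ne
  rcases lt_or_gt_of_ne (hσ.ne (hab.trans hbc).ne) with hac | hca
  · exact Or.inl ⟨0, by rw [rotSeq_zero]; exact containsPat_1324 hab hbc hc hac hbc' hb⟩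
  · have hrot : ∀ x, rotSeq σ c (x - c) = σ x := fun x => by simp [rotSeq]
    have e₁ : ((Fin.last n - c : Fin (n + 1)) : ℕ) = n - c := by
      rw [Fin.coe_sub_iff_le.2 hc.le, Fin.val_last]
    have e₂ : ((a - c : Fin (n + 1)) : ℕ) = n + 1 + a - c :=
      Fin.coe_sub_iff_lt.2 (hab.trans hbc)
    have e₃ : ((b - c : Fin (n + 1)) : ℕ) = n + 1 + b - c := Fin.coe_sub_iff_lt.2 hbc
    have hc' := Fin.lt_def.1 hc
    simp only [Fin.val_last] at hc'
    refine Or.inr ⟨c, containsPat_1423 (a := c - c) (b := Fin.last n - c) (c := a - c)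
      (d := b - c) ?_ ?_ ?_ ?_ ?_ ?_⟩
    · simp only [sub_self, Fin.lt_def, e₁, Fin.val_zero]; omega
    · simp only [Fin.lt_def, e₁, e₂]; omega
    · simp only [Fin.lt_def, e₂, e₃]; omega
    · simpa only [hrot] using hca
    · simpa only [hrot] using hba
    · simpa only [hrot] using hb

section Valley

variable {k : ℕ} {α : Type*} [LinearOrder α] {f : Fin k → α}

theorem strictAntiOn_Iic_of_not_hasPeak (hf : Injective f) (hpeak : ¬HasPeak f) {K : Fin k}
    (hK : ∀ x, f K ≤ f x) : StrictAntiOn f (Set.Iic K) := by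
  intro a _ b (hbK : b ≤ K) hab
  by_contra! hba
  have hab' : f a < f b := hba.lt_of_ne (hf.ne hab.ne)
  have hbK' : b < K := hbK.lt_of_ne fun h => (hab'.trans_le (h ▸ hK a)).false
  exact hpeak ⟨a, b, K, hab, hbK', hab', (hK b).lt_of_ne (hf.ne hbK'.ne')⟩

theorem strictMonoOn_Ici_of_not_hasPeak (hf : Injective f) (hpeak : ¬HasPeak f) {K : Fin k}
    (hK : ∀ x, f K ≤ f x) : StrictMonoOn f (Set.Ici K) := by
  intro b (hKb : K ≤ b) c _ hbc
  by_contra! hcb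
  have hcb' : f c < f b := hcb.lt_of_ne (hf.ne hbc.ne')
  have hKb' : K < b := hKb.lt_of_ne fun h => (hcb'.trans_le (h ▸ hK c)).false
  exact hpeak ⟨K, b, c, hKb', hbc, (hK b).lt_of_ne (hf.ne hKb'.ne), hcb'⟩

end Valley

def valleySeq (S : Finset (Fin n)) (i : Fin n) : Fin n :=
  if h : (i : ℕ) < #S then S.orderEmbOfFin rfl ⟨#S - 1 - i, by omega⟩
  else Sᶜ.orderEmbOfFin (by rw [card_compl, Fintype.card_fin]) ⟨i - #S, by omega⟩

section ValleySeq

variable {S : Finset (Fin n)}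

theorem valleySeq_of_lt {i : Fin n} (h : (i : ℕ) < #S) :
    valleySeq S i = S.orderEmbOfFin rfl ⟨#S - 1 - i, by omega⟩ :=
  dif_pos h

theorem valleySeq_of_le {i : Fin n} (h : #S ≤ (i : ℕ)) :
    valleySeq S i =
      Sᶜ.orderEmbOfFin (by rw [card_compl, Fintype.card_fin]) ⟨i - #S, by omega⟩ :=
  dif_neg h.not_gt

theorem valleySeq_mem {i : Fin n} (h : (i : ℕ) < #S) : valleySeq S i ∈ S := by
  rw [valleySeq_of_lt h]
  exact orderEmbOfFin_mem _ _ _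

theorem valleySeq_notMem {i : Fin n} (h : #S ≤ (i : ℕ)) : valleySeq S i ∉ S := by
  rw [valleySeq_of_le h, ← mem_compl]
  exact orderEmbOfFin_mem _ _ _

theorem valleySeq_strictAntiOn : StrictAntiOn (valleySeq S) {i | (i : ℕ) < #S} := by
  intro i (hi : (i : ℕ) < #S) j (hj : (j : ℕ) < #S) hij
  rw [valleySeq_of_lt hi, valleySeq_of_lt hj, OrderEmbedding.lt_iff_lt, Fin.mk_lt_mk]
  have := Fin.lt_def.1 hij
  omega

theorem valleySeq_strictMonoOn : StrictMonoOn (valleySeq S) {i | #S ≤ (i : ℕ)} := by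
  intro i (hi : #S ≤ (i : ℕ)) j (hj : #S ≤ (j : ℕ)) hij
  rw [valleySeq_of_le hi, valleySeq_of_le hj, OrderEmbedding.lt_iff_lt, Fin.mk_lt_mk]
  have := Fin.lt_def.1 hij
  omega

theorem valleySeq_injective (S : Finset (Fin n)) : Injective (valleySeq S) := by
  intro i j h
  rcases lt_or_ge (i : ℕ) #S with hi | hi <;> rcases lt_or_ge (j : ℕ) #S with hj | hj
  · exact valleySeq_strictAntiOn.injOn hi hj h
  · exact absurd (h ▸ valleySeq_mem hi) (valleySeq_notMem hj)
  · exact absurd (h ▸ valleySeq_mem hj) (valleySeq_notMem hi)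
  · exact valleySeq_strictMonoOn.injOn hi hj h

theorem valleySeq_bijective (S : Finset (Fin n)) : Bijective (valleySeq S) :=
  Finite.injective_iff_bijective.1 (valleySeq_injective S)

theorem not_hasPeak_valleySeq (S : Finset (Fin n)) : ¬HasPeak (valleySeq S) := by
  rintro ⟨a, b, c, hab, hbc, hba, hbc'⟩
  rcases lt_or_ge (b : ℕ) #S with hb | hb
  · exact (valleySeq_strictAntiOn (lt_trans (Fin.lt_def.1 hab) hb) hb hab).asymm hba
  · exact (valleySeq_strictMonoOn hb (hb.trans (Fin.le_def.1 hbc.le)) hbc).asymm hbc'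

theorem eq_valleySeq_image {σ : Fin n → Fin n} (hσ : Injective σ) {K : Fin n}
    (hanti : StrictAntiOn σ (Set.Iic K)) (hmono : StrictMonoOn σ (Set.Ici K)) :
    σ = valleySeq ((Iio K).image σ) := by
  set S := (Iio K).image σ
  have hS : #S = K := by rw [card_image_of_injective _ hσ, Fin.card_Iio]
  have hmem : ∀ i, σ i ∈ S ↔ i < K := fun i => by simp [S, hσ.eq_iff]
  have hleft : (fun x : Fin #S => σ ⟨#S - 1 - x, by omega⟩) = S.orderEmbOfFin rfl := by
    refine orderEmbOfFin_unique rfl (fun x => (hmem _).2 (Fin.lt_def.2 ?_)) fun x y hxy => ?_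
    · simp only; omega
    · refine hanti (Fin.le_def.2 ?_) (Fin.le_def.2 ?_) (Fin.lt_def.2 ?_) <;>
        simp only [Fin.lt_def] at hxy ⊢ <;> omega
  have hright : (fun x : Fin (n - #S) => σ ⟨#S + x, by omega⟩) =
      Sᶜ.orderEmbOfFin (by rw [card_compl, Fintype.card_fin]) := by
    refine orderEmbOfFin_unique _ (fun x => mem_compl.2 ?_) fun x y hxy => ?_
    · rw [hmem, Fin.lt_def, not_lt]; simp only; omega
    · refine hmono (Fin.le_def.2 ?_) (Fin.le_def.2 ?_) (Fin.lt_def.2 ?_) <;>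
        simp only [Fin.lt_def] at hxy ⊢ <;> omega
  funext i
  rcases lt_or_ge (i : ℕ) #S with hi | hi
  · rw [valleySeq_of_lt hi, ← hleft]
    exact congrArg σ (Fin.ext (by simp only; omega))
  · rw [valleySeq_of_le hi, ← hright]
    exact congrArg σ (Fin.ext (by simp only; omega))

theorem valleySeq_mem_iff_lt [NeZero n] (h0 : 0 ∉ S) {i j : Fin n} (hj : valleySeq S j = 0) :
    valleySeq S i ∈ S ↔ i < j := by
  have hSj : #S ≤ j := not_lt.1 fun h => h0 (hj ▸ valleySeq_mem h)
  constructor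
  · intro hi
    exact Fin.lt_def.2 ((not_le.1 fun h => valleySeq_notMem h hi).trans_le hSj)
  · intro hij
    refine valleySeq_mem (not_le.1 fun hi => ?_)
    have := valleySeq_strictMonoOn hi hSj hij
    rw [hj] at this
    exact (Fin.zero_le _).not_gt this

theorem valleySeq_inj [NeZero n] {T : Finset (Fin n)} (hS : 0 ∉ S) (hT : 0 ∉ T)
    (h : valleySeq S = valleySeq T) : S = T := by
  obtain ⟨j, hj⟩ := (valleySeq_bijective S).2 0
  ext v
  obtain ⟨i, rfl⟩ := (valleySeq_bijective S).2 v
  rw [valleySeq_mem_iff_lt hS hj, h, valleySeq_mem_iff_lt hT (h ▸ hj)]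

theorem valleySeq_last {S : Finset (Fin (n + 1))} (h : Fin.last n ∉ S) :
    valleySeq S (Fin.last n) = Fin.last n := by
  obtain ⟨j, hj⟩ := (valleySeq_bijective S).2 (Fin.last n)
  have hSj : #S ≤ j := not_lt.1 fun hlt => h (hj ▸ valleySeq_mem hlt)
  rcases (Fin.le_last j).lt_or_eq with hlt | rfl
  · have := valleySeq_strictMonoOn hSj (hSj.trans (Fin.le_def.1 hlt.le)) hlt
    rw [hj] at this
    exact absurd this (Fin.le_last _).not_gt
  · exact hj

end ValleySeq

theorem subset_Ioo_zero_last_iff {S : Finset (Fin (n + 1))} :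
    S ⊆ Ioo 0 (Fin.last n) ↔ 0 ∉ S ∧ Fin.last n ∉ S := by
  constructor
  · intro h
    exact ⟨fun h0 => by simpa using h h0, fun hl => by simpa using h hl⟩
  · rintro ⟨h0, hl⟩ x hx
    rw [mem_Ioo, Fin.pos_iff_ne_zero, Fin.lt_last_iff_ne_last]
    exact ⟨ne_of_mem_of_not_mem hx h0, ne_of_mem_of_not_mem hx hl⟩

theorem exists_eq_valleySeq {σ : Fin (n + 1) → Fin (n + 1)} (hσ : Bijective σ)
    (hlast : σ (Fin.last n) = Fin.last n) (hpeak : ¬HasPeak σ) :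
    ∃ S ⊆ Ioo 0 (Fin.last n), σ = valleySeq S := by
  obtain ⟨K, hK⟩ := hσ.2 0
  have hmin : ∀ x, σ K ≤ σ x := fun x => hK ▸ Fin.zero_le _
  refine ⟨(Iio K).image σ, fun v hv => ?_, eq_valleySeq_image hσ.1
    (strictAntiOn_Iic_of_not_hasPeak hσ.1 hpeak hmin)
    (strictMonoOn_Ici_of_not_hasPeak hσ.1 hpeak hmin)⟩
  obtain ⟨x, hx, rfl⟩ := mem_image.1 hv
  have hxK : x < K := mem_Iio.1 hx
  rw [mem_Ioo, Fin.pos_iff_ne_zero, Fin.lt_last_iff_ne_last, ← hK, ← hlast]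
  exact ⟨hσ.1.ne hxK.ne, hσ.1.ne (hxK.trans_le (Fin.le_last K)).ne⟩

theorem cycAvoids_1324_1423_iff {σ : Fin (n + 1) → Fin (n + 1)} (hσ : Injective σ)
    (hlast : σ (Fin.last n) = Fin.last n) :
    CycAvoids σ ![1, 3, 2, 4] ∧ CycAvoids σ ![1, 4, 2, 3] ↔ ¬HasPeak σ := by
  constructor
  · rintro ⟨h₁, h₂⟩ hpeak
    exact (cycContains_of_hasPeak hσ hlast hpeak).elim h₁ h₂
  · intro hpeak
    exact ⟨fun h => hpeak (hasPeak_of_cycContains (by decide) (by decide) (by decide) h),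
      fun h => hpeak (hasPeak_of_cycContains (by decide) (by decide) (by decide) h)⟩

theorem avClasses_eq_image :
    AvClasses (n + 1) (fun σ => CycAvoids σ ![1, 3, 2, 4] ∧ CycAvoids σ ![1, 4, 2, 3]) =
      (fun S => CycClass (valleySeq S)) '' ↑(Ioo 0 (Fin.last n)).powerset := by
  ext C
  constructor
  · rintro ⟨σ, rfl, hav⟩
    obtain ⟨r, hr⟩ := exists_rotSeq_apply_last σ.surjective
    have hbij : Bijective (rotSeq σ r) := σ.bijective.comp (Equiv.addRight r).bijective
    rw [← cycAvoids_rotSeq_iff σ r, ← cycAvoids_rotSeq_iff σ r,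
      cycAvoids_1324_1423_iff hbij.1 hr] at hav
    obtain ⟨S, hS, hσS⟩ := exists_eq_valleySeq hbij hr hav
    exact ⟨S, mem_powerset.2 hS, by dsimp only; rw [← hσS, cycClass_rotSeq]⟩
  · rintro ⟨S, hS, rfl⟩
    have hlast := valleySeq_last (subset_Ioo_zero_last_iff.1 (mem_powerset.1 hS)).2
    exact ⟨Equiv.ofBijective _ (valleySeq_bijective S), rfl,
      (cycAvoids_1324_1423_iff (valleySeq_injective S) hlast).2 (not_hasPeak_valleySeq S)⟩

theorem injOn_cycClass_valleySeq :
    Set.InjOn (fun S : Finset (Fin (n + 1)) => CycClass (valleySeq S))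
      ↑(Ioo 0 (Fin.last n)).powerset := by
  intro S hS T hT (h : CycClass (valleySeq S) = CycClass (valleySeq T))
  obtain ⟨hS0, hSl⟩ := subset_Ioo_zero_last_iff.1 (mem_powerset.1 hS)
  obtain ⟨hT0, hTl⟩ := subset_Ioo_zero_last_iff.1 (mem_powerset.1 hT)
  have hmem : valleySeq T ∈ CycClass (valleySeq S) := h ▸ mem_cycClass_self _
  have hlast : valleySeq T (Fin.last n) = valleySeq S (Fin.last n) := by
    rw [valleySeq_last hTl, valleySeq_last hSl]
  exact (valleySeq_inj hT0 hS0 (eq_of_mem_cycClass (valleySeq_injective S) hmem hlast)).symm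

theorem card_av_1324_1423 (n : ℕ) (hn : 3 ≤ n) :
    (AvClasses n fun σ => CycAvoids σ ![1,3,2,4] ∧ CycAvoids σ ![1,4,2,3]).ncard = 2 ^ (n - 2) := by
  obtain ⟨m, rfl⟩ : ∃ m, n = m + 1 := ⟨n - 1, by omega⟩
  rw [avClasses_eq_image, injOn_cycClass_valleySeq.ncard_image,
    Set.ncard_coe_finset, card_powerset, Fin.card_Ioo, Fin.val_last, Fin.val_zero]
  rfl
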